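/- Let P(q) = sum_{i=0}^{2k} c_i q^i with c_i = c_{2k-i} for all i. Then Q(q) = (1+q) P(q) is unimodal (as a symmetric polynomial of odd degree 2k+1) if and only if c_0 <= c_2 <= ... <= c_{2*floor(k/2)} and c_{2*ceil(k/2)-1} >= ... >= c_3 >= c_1 >= 0. -/

import Mathlib

/-!
The coefficients of `(1 + q) P` are `c 0` and `c (n + 1) + c n`, so its successive differences
are `c 1` and `c (n + 2) - c n`. Unimodality up to the middle coefficient `k` is therefore
`0 ≤ c 1` together with `c j ≤ c (j + 2)` for `j + 2 ≤ k`, and these steps split into the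
chain of even and the chain of odd indices.
-/

open Polynomial

namespace Polynomial

section Semiring

variable {R : Type*} [Semiring R]

theorem coeff_sum_range_C_mul_X_pow (c : ℕ → R) {n i : ℕ} (hi : i < n) :
    (∑ j ∈ Finset.range n, C (c j) * X ^ j).coeff i = c i := by
  simp only [finsetSum_coeff, coeff_C_mul_X_pow]
  rw [Finset.sum_ite_eq, if_pos (Finset.mem_range.2 hi)]

theorem coeff_one_add_X_mul_zero (p : R[X]) : ((1 + X) * p).coeff 0 = p.coeff 0 := by
  simp

theorem coeff_one_add_X_mul_succ (p : R[X]) (n : ℕ) :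
    ((1 + X) * p).coeff (n + 1) = p.coeff (n + 1) + p.coeff n := by
  rw [add_mul, one_mul, coeff_add, coeff_X_mul]

end Semiring

section OrderedRing

variable {R : Type*} [Ring R] [PartialOrder R] [IsOrderedAddMonoid R]

theorem coeff_one_add_X_mul_zero_le_one_iff (p : R[X]) :
    ((1 + X) * p).coeff 0 ≤ ((1 + X) * p).coeff 1 ↔ 0 ≤ p.coeff 1 := by
  rw [coeff_one_add_X_mul_zero, coeff_one_add_X_mul_succ, le_add_iff_nonneg_left]

theorem coeff_one_add_X_mul_succ_le_iff (p : R[X]) (n : ℕ) :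
    ((1 + X) * p).coeff (n + 1) ≤ ((1 + X) * p).coeff (n + 2) ↔ p.coeff n ≤ p.coeff (n + 2) := by
  rw [coeff_one_add_X_mul_succ, coeff_one_add_X_mul_succ, add_comm (p.coeff (n + 2)),
    add_le_add_iff_left]

theorem coeff_one_add_X_mul_le_succ_iff (p : R[X]) {k : ℕ} (hk : 1 ≤ k) :
    (∀ i, i + 1 ≤ k → ((1 + X) * p).coeff i ≤ ((1 + X) * p).coeff (i + 1)) ↔
      0 ≤ p.coeff 1 ∧ ∀ j, j + 2 ≤ k → p.coeff j ≤ p.coeff (j + 2) := by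
  constructor
  · intro h
    exact ⟨(coeff_one_add_X_mul_zero_le_one_iff p).1 (h 0 (by omega)),
      fun j hj => (coeff_one_add_X_mul_succ_le_iff p j).1 (h (j + 1) (by omega))⟩
  · rintro ⟨h₁, h₂⟩ (_ | j) hj
    · exact (coeff_one_add_X_mul_zero_le_one_iff p).2 h₁
    · exact (coeff_one_add_X_mul_succ_le_iff p j).2 (h₂ j (by omega))

end OrderedRing

end Polynomial

theorem forall_le_add_two_iff_even_and_odd {α : Type*} [LE α] (f : ℕ → α) (k : ℕ) :
    (∀ j, j + 2 ≤ k → f j ≤ f (j + 2)) ↔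
      (∀ i, 2 * (i + 1) ≤ 2 * (k / 2) → f (2 * i) ≤ f (2 * (i + 1))) ∧
      (∀ i, 2 * i + 3 ≤ 2 * ((k + 1) / 2) - 1 → f (2 * i + 1) ≤ f (2 * i + 3)) := by
  constructor
  · intro h
    exact ⟨fun i hi => h (2 * i) (by omega), fun i hi => h (2 * i + 1) (by omega)⟩
  · rintro ⟨heven, hodd⟩ j hj
    obtain ⟨m, rfl | rfl⟩ := Nat.even_or_odd' j
    · exact heven m (by omega)
    · exact hodd m (by omega)

open Polynomial in
theorem unimodal_one_add_q_mul_iff_even_case_general (k : ℕ) (hk : 1 ≤ k) (c : ℕ → ℤ)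
    (P : Polynomial ℤ) (hP : P = ∑ i ∈ Finset.range (2 * k + 1), C (c i) * X ^ i) :
    -- `Q = (1+q)P` is unimodal as a symmetric polynomial of odd degree `2k+1`
    (∀ i, i + 1 ≤ k → ((1 + X) * P).coeff i ≤ ((1 + X) * P).coeff (i + 1)) ↔
      ((∀ i, 2 * (i + 1) ≤ 2 * (k / 2) → c (2 * i) ≤ c (2 * (i + 1))) ∧
       (∀ i, 2 * i + 3 ≤ 2 * ((k + 1) / 2) - 1 → c (2 * i + 1) ≤ c (2 * i + 3)) ∧
       0 ≤ c 1) := by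
  have hPc : ∀ i ≤ 2 * k, P.coeff i = c i := fun i hi =>
    hP ▸ coeff_sum_range_C_mul_X_pow c (by omega)
  have hsteps : (∀ j, j + 2 ≤ k → P.coeff j ≤ P.coeff (j + 2)) ↔
      ∀ j, j + 2 ≤ k → c j ≤ c (j + 2) :=
    forall_congr' fun j => imp_congr_right fun hj => by
      rw [hPc j (by omega), hPc (j + 2) (by omega)]
  rw [coeff_one_add_X_mul_le_succ_iff P hk, hsteps, forall_le_add_two_iff_even_and_odd,
    hPc 1 (by omega), and_comm, and_assoc]

open Polynomial in
theorem unimodal_one_add_q_mul_iff_even_case (k : ℕ) (hk : 1 ≤ k) (c : ℕ → ℤ)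
    (hsym : ∀ i ≤ 2 * k, c i = c (2 * k - i))
    (P : Polynomial ℤ) (hP : P = ∑ i ∈ Finset.range (2 * k + 1), C (c i) * X ^ i) :
    -- `Q = (1+q)P` is unimodal as a symmetric polynomial of odd degree `2k+1`
    (∀ i, i + 1 ≤ k → ((1 + X) * P).coeff i ≤ ((1 + X) * P).coeff (i + 1)) ↔
      ((∀ i, 2 * (i + 1) ≤ 2 * (k / 2) → c (2 * i) ≤ c (2 * (i + 1))) ∧
       (∀ i, 2 * i + 3 ≤ 2 * ((k + 1) / 2) - 1 → c (2 * i + 1) ≤ c (2 * i + 3)) ∧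
       0 ≤ c 1) :=
  unimodal_one_add_q_mul_iff_even_case_general k hk c P hP
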